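/- For $\alpha = 1$ (logarithmic potential), the numbers $s_j = \frac{1}{2}\sum_{l=1}^{k-1} \frac{\sin^2(jl\zeta/2)}{\sin^{2}(l\zeta/2)}$ with $\zeta = 2\pi/k$ satisfy $s_j = \frac{j(k-j)}{2}$ for $j = 0, 1, \dots, k$. -/

import Mathlib

/-!
For `f j = ∑_{l=1}^{k-1} sin²(j l π/k) / sin²(l π/k)`, the identity
`sin²(m + x) + sin²(m - x) = 2 sin² m + 2 cos(2m) sin² x` gives the second difference
`f (j + 2) - 2 f (j + 1) + f j = 2 ∑_{l=1}^{k-1} cos(2π (j + 1) l / k)`. For `0 < j + 1 < k` this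
is twice the real part of the sum of the nontrivial powers of a `k`-th root of unity `≠ 1`,
i.e. `-2`. With `f 0 = 0` and `f 1 = k - 1` this forces `f j = j (k - j)`.
-/

open Real Finset

theorem sin_add_sq_add_sin_sub_sq (m x : ℝ) :
    sin (m + x) ^ 2 + sin (m - x) ^ 2 = 2 * sin m ^ 2 + 2 * cos (2 * m) * sin x ^ 2 := by
  rw [sin_add, sin_sub, cos_two_mul']
  nlinarith [sin_sq_add_cos_sq x, sin_sq_add_cos_sq m]

theorem cos_two_pi_mul_div_eq_re_exp_pow (k n : ℕ) :
    cos (2 * π * n / k) = ((Complex.exp (2 * π * Complex.I / k)) ^ n).re := by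
  rw [← Complex.exp_nat_mul, ← Complex.exp_ofReal_mul_I_re]
  push_cast
  ring_nf

theorem sum_range_cos_two_pi_mul_div_eq_zero {k m : ℕ} (h : ¬ k ∣ m) :
    ∑ l ∈ range k, cos (2 * π * m * l / k) = 0 := by
  rcases Nat.eq_zero_or_pos k with rfl | hk
  · simp
  have hω := Complex.isPrimitiveRoot_exp k hk.ne'
  set ω := Complex.exp (2 * π * Complex.I / k)
  have hne : ω ^ m ≠ 1 := fun h' => h ((hω.pow_eq_one_iff_dvd m).1 h')
  have hpow : (ω ^ m) ^ k = 1 := by rw [← pow_mul, mul_comm, pow_mul, hω.pow_eq_one, one_pow]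
  have hgeom : ∑ l ∈ range k, (ω ^ m) ^ l = 0 := by
    rw [geom_sum_eq hne, hpow, sub_self, zero_div]
  calc ∑ l ∈ range k, cos (2 * π * m * l / k)
      = (∑ l ∈ range k, (ω ^ m) ^ l).re := by
        rw [Complex.re_sum]
        refine sum_congr rfl fun l _ => ?_
        rw [← pow_mul, ← cos_two_pi_mul_div_eq_re_exp_pow]
        push_cast
        ring_nf
    _ = 0 := by rw [hgeom, Complex.zero_re]

theorem sum_Icc_cos_two_pi_mul_div_eq_neg_one {k m : ℕ} (hk : 0 < k) (h : ¬ k ∣ m) :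
    ∑ l ∈ Icc 1 (k - 1), cos (2 * π * m * l / k) = -1 := by
  have hsum := sum_range_cos_two_pi_mul_div_eq_zero h
  rw [range_eq_Ico, sum_eq_sum_Ico_succ_bot hk] at hsum
  have hIcc : Icc 1 (k - 1) = Ico 1 k := by
    rw [← Ico_add_one_right_eq_Icc, Nat.sub_add_cancel (by omega)]
  rw [hIcc]
  simpa [add_eq_zero_iff_eq_neg'] using hsum

theorem sin_nat_mul_pi_div_pos {k l : ℕ} (hl : 0 < l) (hlk : l < k) : 0 < sin (l * π / k) := by
  have hk : (0 : ℝ) < k := by exact_mod_cast hl.trans hlk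
  apply sin_pos_of_pos_of_lt_pi (by positivity)
  rw [div_lt_iff₀ hk, mul_comm π]
  gcongr

theorem sin_sq_div_sin_sq_add_two (t x : ℝ) (hx : sin x ≠ 0) :
    sin ((t + 2) * x) ^ 2 / sin x ^ 2
      = 2 * (sin ((t + 1) * x) ^ 2 / sin x ^ 2) - sin (t * x) ^ 2 / sin x ^ 2
        + 2 * cos (2 * ((t + 1) * x)) := by
  have h := sin_add_sq_add_sin_sub_sq ((t + 1) * x) x
  rw [show (t + 1) * x + x = (t + 2) * x by ring, show (t + 1) * x - x = t * x by ring] at h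
  have h' : sin ((t + 2) * x) ^ 2
      = 2 * sin ((t + 1) * x) ^ 2 - sin (t * x) ^ 2 + 2 * cos (2 * ((t + 1) * x)) * sin x ^ 2 := by
    linarith
  rw [h', add_div, sub_div, mul_div_assoc, mul_div_assoc, div_self (pow_ne_zero 2 hx), mul_one]

/-- `2 s_j` in the paper's notation, since `l ζ / 2 = l π / k`. -/
noncomputable def polygonSum (k j : ℕ) : ℝ :=
  ∑ l ∈ Icc 1 (k - 1), sin (j * (l * π / k)) ^ 2 / sin (l * π / k) ^ 2

theorem polygonSum_one {k : ℕ} (hk : 1 ≤ k) : polygonSum k 1 = k - 1 := by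
  have hterm : ∀ l ∈ Icc 1 (k - 1),
      sin (((1 : ℕ) : ℝ) * (l * π / k)) ^ 2 / sin (l * π / k) ^ 2 = 1 := by
    intro l hl
    rw [mem_Icc] at hl
    have hsin := sin_nat_mul_pi_div_pos (k := k) (l := l) (by omega) (by omega)
    rw [Nat.cast_one, one_mul, div_self (pow_ne_zero 2 hsin.ne')]
  rw [polygonSum, sum_congr rfl hterm, sum_const, Nat.card_Icc,
    show k - 1 + 1 - 1 = k - 1 by omega, nsmul_one, Nat.cast_sub hk]
  simp

theorem polygonSum_add_two {k j : ℕ} (hj : j + 2 ≤ k) :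
    polygonSum k (j + 2) = 2 * polygonSum k (j + 1) - polygonSum k j - 2 := by
  have hstep : ∀ l ∈ Icc 1 (k - 1),
      sin (((j + 2 : ℕ) : ℝ) * (l * π / k)) ^ 2 / sin (l * π / k) ^ 2
        = 2 * (sin (((j + 1 : ℕ) : ℝ) * (l * π / k)) ^ 2 / sin (l * π / k) ^ 2)
          - sin (j * (l * π / k)) ^ 2 / sin (l * π / k) ^ 2
          + 2 * cos (2 * π * (j + 1 : ℕ) * l / k) := by
    intro l hl
    rw [mem_Icc] at hl
    have hsin := sin_nat_mul_pi_div_pos (k := k) (l := l) (by omega) (by omega)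
    push_cast
    rw [sin_sq_div_sin_sq_add_two _ _ hsin.ne']
    ring_nf
  have hcos := sum_Icc_cos_two_pi_mul_div_eq_neg_one (k := k) (m := j + 1) (by omega)
    (Nat.not_dvd_of_pos_of_lt (by omega) (by omega))
  rw [polygonSum, sum_congr rfl hstep, sum_add_distrib, sum_sub_distrib, ← mul_sum, ← mul_sum,
    hcos, polygonSum, polygonSum]
  ring

theorem polygonSum_eq {k j : ℕ} (hj : j ≤ k) : polygonSum k j = j * (k - j) := by
  induction j using Nat.twoStepInduction with
  | zero => simp [polygonSum]
  | one => rw [polygonSum_one hj]; push_cast; ring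
  | more j ih₁ ih₂ =>
    rw [polygonSum_add_two hj, ih₁ (by omega), ih₂ (by omega)]
    push_cast
    ring

theorem polygon_coefficients_log_case_general
    (k : ℕ) (ζ : ℝ) (hζ : ζ = 2 * π / k) :
    ∀ j : ℕ, j ≤ k →
      (1 / 2) * ∑ l ∈ Finset.Icc 1 (k - 1),
          (Real.sin ((j : ℝ) * l * ζ / 2)) ^ 2 / (Real.sin (l * ζ / 2)) ^ 2
        = (j : ℝ) * ((k : ℝ) - j) / 2 := by
  intro j hj
  have hangle : ∀ l : ℕ, (l : ℝ) * ζ / 2 = l * π / k := fun l => by rw [hζ]; ring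
  have hsum := polygonSum_eq hj
  simp only [polygonSum, ← hangle] at hsum
  simp only [mul_assoc, mul_div_assoc] at hsum ⊢
  rw [hsum]
  ring

/-- For the logarithmic potential (`α = 1`), the coefficients
`s_j = ½ ∑_{l=1}^{k-1} sin²(jlζ/2)/sin²(lζ/2)` with `ζ = 2π/k` evaluate
explicitly to `s_j = j(k-j)/2` for `0 ≤ j ≤ k`. -/
theorem polygon_coefficients_log_case
    (k : ℕ) (hk : 2 ≤ k) (ζ : ℝ) (hζ : ζ = 2 * π / k) :
    ∀ j : ℕ, j ≤ k →
      (1 / 2) * ∑ l ∈ Finset.Icc 1 (k - 1),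
          (Real.sin ((j : ℝ) * l * ζ / 2)) ^ 2 / (Real.sin (l * ζ / 2)) ^ 2
        = (j : ℝ) * ((k : ℝ) - j) / 2 :=
  polygon_coefficients_log_case_general k ζ hζ
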